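/- arXiv:math/0401010 — 4 statements merged into one kernel-verified Lean document; each statement's English description precedes it below -/
import Mathlib

section
/- For every real number θ, −2 ∫₀^θ log|2 sin t| dt = Σ_{n=1}^∞ sin(2nθ)/n². (In other words, the Bloch–Wigner dilogarithm of e^{2iθ}, given by the convergent series Σ_{n=1}^∞ sin(2nθ)/n², equals −2 times the integral of log|2 sin t| from 0 to θ.) -/
/-!
For `|r| < 1` the Taylor series of `-log (1 - z)` at `z = r e^{it}` gives
`-log ‖1 - r e^{it}‖ = ∑ rⁿ cos (n t) / n`; integrating termwise over `[0, φ]` yields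
`-∫₀^φ log ‖1 - r e^{it}‖ dt = ∑ rⁿ sin (n φ) / n²`. Let `r → 1⁻`: the series side converges by
Abel's theorem, and the integral side by dominated convergence, since for `1/4 ≤ r ≤ 1`
one has `‖1 - e^{it}‖ / 2 ≤ ‖1 - r e^{it}‖ ≤ 2`, while `‖1 - e^{it}‖ = |2 sin (t / 2)|`.
This is Clausen's formula `∑ sin (n φ) / n² = -∫₀^φ log |2 sin (t / 2)| dt`; the theorem is
its case `φ = 2θ` after the substitution `t ↦ 2t`.
-/

open Real Filter Topology MeasureTheory
open Complex (I)
open scoped Complex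

lemma norm_one_sub_ofReal_mul_sq {w : ℂ} (hw : ‖w‖ = 1) (r : ℝ) :
    ‖1 - r * w‖ ^ 2 = (1 - r) ^ 2 + r * ‖1 - w‖ ^ 2 := by
  have hw' := Complex.sq_norm w
  rw [hw, Complex.normSq_apply] at hw'
  simp only [Complex.sq_norm, Complex.normSq_apply, Complex.sub_re, Complex.sub_im,
    Complex.one_re, Complex.one_im, Complex.re_ofReal_mul, Complex.im_ofReal_mul]
  linear_combination (r - r ^ 2) * hw'

lemma abs_log_norm_one_sub_ofReal_mul_le {w : ℂ} (hw : ‖w‖ = 1) (hw1 : w ≠ 1) {r : ℝ}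
    (hr : 1 / 4 ≤ r) (hr1 : r ≤ 1) :
    |log ‖1 - r * w‖| ≤ log 2 + |log ‖1 - w‖| := by
  have hpos : 0 < ‖1 - w‖ := norm_pos_iff.mpr (sub_ne_zero.mpr hw1.symm)
  have hlower : ‖1 - w‖ / 2 ≤ ‖1 - r * w‖ := by
    refine (pow_le_pow_iff_left₀ (by positivity) (norm_nonneg _) two_ne_zero).1 ?_
    rw [norm_one_sub_ofReal_mul_sq hw]
    nlinarith [sq_nonneg (1 - r), sq_nonneg ‖1 - w‖]
  have hupper : ‖1 - r * w‖ ≤ 2 := by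
    calc ‖1 - r * w‖ ≤ ‖(1 : ℂ)‖ + ‖(r : ℂ) * w‖ := norm_sub_le _ _
      _ ≤ 2 := by simp [hw, abs_of_nonneg (by linarith : (0 : ℝ) ≤ r)]; linarith
  have h1 : log ‖1 - r * w‖ ≤ log 2 := log_le_log ((half_pos hpos).trans_le hlower) hupper
  have h2 : log ‖1 - w‖ - log 2 ≤ log ‖1 - r * w‖ := by
    rw [← log_div hpos.ne' two_ne_zero]; exact log_le_log (by positivity) hlower
  have hlog2 : 0 ≤ log 2 := log_nonneg one_le_two
  rw [abs_le]; constructor <;> linarith [neg_abs_le (log ‖1 - w‖), le_abs_self (log ‖1 - w‖)]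

lemma hasSum_cos_mul_div_mul_pow {r : ℝ} (hr : |r| < 1) (t : ℝ) :
    HasSum (fun n : ℕ => cos (n * t) / n * r ^ n) (-log ‖1 - r * cexp (I * t)‖) := by
  have hz : ‖(r : ℂ) * cexp (I * t)‖ < 1 := by
    rwa [norm_mul, mul_comm I, Complex.norm_exp_ofReal_mul_I, mul_one, Complex.norm_real]
  convert Complex.hasSum_re (Complex.hasSum_taylorSeries_neg_log hz) using 1
  · ext n
    rw [mul_pow, ← Complex.exp_nat_mul, ← mul_assoc, mul_comm (n : ℂ) I, mul_assoc,
      mul_comm I, ← Complex.ofReal_natCast, ← Complex.ofReal_mul, ← Complex.ofReal_pow,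
      Complex.div_ofReal_re, Complex.re_ofReal_mul, Complex.exp_ofReal_mul_I_re]
    ring
  · simp [Complex.log_re]

lemma integral_cos_mul_div (φ : ℝ) (n : ℕ) :
    ∫ t in (0 : ℝ)..φ, cos (n * t) / n = sin (n * φ) / n ^ 2 := by
  rcases eq_or_ne n 0 with rfl | hn
  · simp
  have hn' : (n : ℝ) ≠ 0 := Nat.cast_ne_zero.mpr hn
  rw [intervalIntegral.integral_div, intervalIntegral.integral_comp_mul_left (fun x => cos x) hn',
    integral_cos]
  simp only [smul_eq_mul, mul_zero, sin_zero, sub_zero]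
  field_simp

lemma abs_cos_mul_div_le_one (n : ℕ) (t : ℝ) : |cos (n * t) / n| ≤ 1 := by
  rcases eq_or_ne n 0 with rfl | hn
  · simp
  have hn1 : (1 : ℝ) ≤ n := Nat.one_le_cast.mpr (Nat.one_le_iff_ne_zero.mpr hn)
  rw [abs_div, Nat.abs_cast]
  exact div_le_one_of_le₀ ((abs_cos_le_one _).trans hn1) n.cast_nonneg

lemma hasSum_sin_mul_div_sq_mul_pow {r : ℝ} (hr : |r| < 1) (φ : ℝ) :
    HasSum (fun n : ℕ => sin (n * φ) / n ^ 2 * r ^ n)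
      (-∫ t in (0 : ℝ)..φ, log ‖1 - r * cexp (I * t)‖) := by
  rw [← intervalIntegral.integral_neg]
  have := intervalIntegral.hasSum_integral_of_dominated_convergence
    (μ := volume) (a := 0) (b := φ) (F := fun (n : ℕ) (t : ℝ) => cos (n * t) / n * r ^ n)
    (fun n _ => |r| ^ n) (fun n => by fun_prop)
    (fun n => ae_of_all _ fun t _ => by
      rw [norm_mul, norm_pow, Real.norm_eq_abs, Real.norm_eq_abs]
      exact mul_le_of_le_one_left (by positivity) (abs_cos_mul_div_le_one n t))
    (ae_of_all _ fun _ _ => summable_geometric_of_lt_one (abs_nonneg r) hr)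
    intervalIntegrable_const
    (ae_of_all _ fun t _ => hasSum_cos_mul_div_mul_pow hr t)
  simpa only [intervalIntegral.integral_mul_const, integral_cos_mul_div] using this

lemma norm_one_sub_exp_I_mul (t : ℝ) : ‖1 - cexp (I * t)‖ = |2 * sin (t / 2)| := by
  rw [norm_sub_rev, Complex.norm_exp_I_mul_ofReal_sub_one, Real.norm_eq_abs]

lemma intervalIntegrable_log_abs_two_mul_sin_half (a b : ℝ) :
    IntervalIntegrable (fun t => log |2 * sin (t / 2)|) volume a b := by
  have : AnalyticOnNhd ℝ (fun t => 2 * sin (t / 2)) (Set.uIcc a b) := fun t _ => by fun_prop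
  simpa only [Real.norm_eq_abs] using this.meromorphicOn.intervalIntegrable_log_norm

lemma ae_exp_I_mul_ne_one : ∀ᵐ t : ℝ, cexp (I * t) ≠ 1 := by
  refine Set.Countable.ae_notMem (s := {t : ℝ | cexp (I * t) = 1}) ?_ volume
  refine (Set.countable_range fun n : ℤ => n * (2 * π)).mono fun t ht => ?_
  obtain ⟨n, hn⟩ := Complex.exp_eq_one_iff.mp ht
  refine ⟨n, ?_⟩
  apply_fun Complex.im at hn
  simpa using hn.symm

lemma tendsto_integral_log_norm_one_sub_ofReal_mul_exp (φ : ℝ) :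
    Tendsto (fun r : ℝ => ∫ t in (0 : ℝ)..φ, log ‖1 - r * cexp (I * t)‖) (𝓝[<] 1)
      (𝓝 (∫ t in (0 : ℝ)..φ, log |2 * sin (t / 2)|)) := by
  have hnear : ∀ᶠ r in 𝓝[<] (1 : ℝ), r ∈ Set.Ioo (1 / 4) 1 := Ioo_mem_nhdsLT (by norm_num)
  refine intervalIntegral.tendsto_integral_filter_of_dominated_convergence
    (fun t => log 2 + |log (|2 * sin (t / 2)|)|) (.of_forall fun r => ?_) ?_
    (intervalIntegrable_const.add (intervalIntegrable_log_abs_two_mul_sin_half 0 φ).abs) ?_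
  · exact (by fun_prop : Measurable fun t : ℝ => log ‖1 - r * cexp (I * t)‖).aestronglyMeasurable
  · filter_upwards [hnear] with r hr
    filter_upwards [ae_exp_I_mul_ne_one] with t ht _
    rw [Real.norm_eq_abs, ← norm_one_sub_exp_I_mul]
    exact abs_log_norm_one_sub_ofReal_mul_le (Complex.norm_exp_I_mul_ofReal t) ht hr.1.le hr.2.le
  · filter_upwards [ae_exp_I_mul_ne_one] with t ht _
    have hcont : ContinuousAt (fun r : ℝ => log ‖1 - r * cexp (I * t)‖) 1 :=
      ContinuousAt.log (by fun_prop) (by simpa [sub_eq_zero] using Ne.symm ht)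
    simpa [norm_one_sub_exp_I_mul] using hcont.tendsto.mono_left nhdsWithin_le_nhds

lemma summable_sin_mul_div_sq (φ : ℝ) : Summable fun n : ℕ => sin (n * φ) / n ^ 2 :=
  .of_norm_bounded (Real.summable_one_div_nat_pow.mpr one_lt_two) fun n => by
    rw [Real.norm_eq_abs, abs_div, abs_of_nonneg (by positivity : (0 : ℝ) ≤ n ^ 2)]
    exact div_le_div_of_nonneg_right (abs_sin_le_one _) (by positivity)

theorem hasSum_sin_mul_div_sq (φ : ℝ) :
    HasSum (fun n : ℕ => sin (n * φ) / n ^ 2) (-∫ t in (0 : ℝ)..φ, log |2 * sin (t / 2)|) := by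
  have hsum := summable_sin_mul_div_sq φ
  have habel := Real.tendsto_tsum_powerSeries_nhdsWithin_lt hsum.hasSum.tendsto_sum_nat
  have hpow : (fun r : ℝ => ∑' n : ℕ, sin (n * φ) / n ^ 2 * r ^ n) =ᶠ[𝓝[<] 1]
      fun r => -∫ t in (0 : ℝ)..φ, log ‖1 - r * cexp (I * t)‖ := by
    filter_upwards [Ioo_mem_nhdsLT (show (-1 : ℝ) < 1 by norm_num)] with r hr
    exact (hasSum_sin_mul_div_sq_mul_pow (abs_lt.mpr hr) φ).tsum_eq
  rw [← tendsto_nhds_unique (habel.congr' hpow)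
    (tendsto_integral_log_norm_one_sub_ofReal_mul_exp φ).neg]
  exact hsum.hasSum

/-- For every real `θ`, `−2 ∫₀^θ log|2 sin t| dt = Σ_{n=1}^∞ sin(2nθ)/n²`. -/
theorem bloch_wigner_integral_eq_tsum (θ : ℝ) :
    -2 * ∫ t in (0:ℝ)..θ, Real.log |2 * Real.sin t| =
      ∑' n : ℕ, Real.sin (2 * (n + 1) * θ) / ((n : ℝ) + 1) ^ 2 := by
  have h := (hasSum_nat_add_iff' 1).mpr (hasSum_sin_mul_div_sq (2 * θ))
  rw [intervalIntegral.integral_comp_div (fun t => log |2 * sin t|) two_ne_zero, zero_div,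
    mul_div_cancel_left₀ θ two_ne_zero, smul_eq_mul] at h
  convert h.tsum_eq.symm using 1
  · simp
  · congr with n
    push_cast
    ring_nf
end

section
/- Let m, n be distinct positive integers and let t > 0 be real. Consider N_t(X) = X^m(X^n − 1)² − t²·X^n(X^m − 1)² ∈ ℝ[X]. Then 1 is a root of N_t of multiplicity exactly 2 if t ≠ n/m, and of multiplicity exactly 4 if t = n/m. -/
/-!
Writing `G k = 1 + X + ⋯ + X ^ (k - 1)`, we have `N_t = (X - 1) ^ 2 * Q` with
`Q = X ^ m * G n ^ 2 - t ^ 2 * X ^ n * G m ^ 2`, and `Q(1) = n ^ 2 - t ^ 2 * m ^ 2` vanishes only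
for `t = n / m`. In that case we expand `Q` at `1` to second order, computing with `X = 1 + ε`
in the ring where `ε ^ 3 = 0`: the constant and linear terms cancel and
`Q ≡ n ^ 2 (n ^ 2 - m ^ 2) / 12 * (X - 1) ^ 2`, with a nonzero coefficient since `m ≠ n`.
-/

open Polynomial Finset

section PowThreeEqZero

variable {S : Type*} [CommRing S] {ε : S}

theorem one_add_pow_of_pow_three_eq_zero (hε : ε ^ 3 = 0) (k : ℕ) :
    (1 + ε) ^ k = 1 + k * ε + k.choose 2 * ε ^ 2 := by
  induction k with
  | zero => simp
  | succ k ih =>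
    rw [pow_succ, ih, Nat.choose_succ_succ, Nat.choose_one_right]
    push_cast
    linear_combination (k.choose 2 : S) * hε

theorem geom_sum_one_add_of_pow_three_eq_zero (hε : ε ^ 3 = 0) (k : ℕ) :
    ∑ i ∈ range k, (1 + ε) ^ i = k + k.choose 2 * ε + k.choose 3 * ε ^ 2 := by
  induction k with
  | zero => simp
  | succ k ih =>
    rw [sum_range_succ, ih, one_add_pow_of_pow_three_eq_zero hε, Nat.choose_succ_succ,
      Nat.choose_succ_succ k 2, Nat.choose_one_right]
    push_cast
    ring

theorem one_add_pow_mul_geom_sum_sq_of_pow_three_eq_zero (hε : ε ^ 3 = 0) (m n : ℕ) :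
    (1 + ε) ^ m * (∑ i ∈ range n, (1 + ε) ^ i) ^ 2
      = n ^ 2 + (m * n ^ 2 + 2 * n * n.choose 2) * ε
        + (m.choose 2 * n ^ 2 + 2 * m * n * n.choose 2 + n.choose 2 ^ 2 + 2 * n * n.choose 3)
          * ε ^ 2 := by
  rw [one_add_pow_of_pow_three_eq_zero hε, geom_sum_one_add_of_pow_three_eq_zero hε]
  have hε4 : ε ^ 4 = 0 := by rw [pow_succ, hε, zero_mul]
  have hε5 : ε ^ 5 = 0 := by rw [pow_succ, hε4, zero_mul]
  have hε6 : ε ^ 6 = 0 := by rw [pow_succ, hε5, zero_mul]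
  ring_nf
  rw [hε, hε4, hε5, hε6]
  ring

end PowThreeEqZero

theorem Nat.cast_choose_three {K : Type*} [Field K] [CharZero K] (k : ℕ) :
    (k.choose 3 : K) = k * (k - 1) * (k - 2) / 6 := by
  rw [Nat.cast_choose_eq_descPochhammer_div]
  simp [descPochhammer_succ_right, Nat.factorial]

theorem eq_div_of_sq_mul_sq_eq_sq {t : ℝ} {m n : ℕ} (ht : 0 ≤ t) (hmn : m ≠ n)
    (h : t ^ 2 * m ^ 2 = n ^ 2) : t = n / m := by
  have htm : t * m = n := (sq_eq_sq₀ (by positivity) (by positivity)).1 (by rw [mul_pow, h])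
  have hm : (m : ℝ) ≠ 0 := by
    rintro hm
    have hmn' : (m : ℝ) = n := by rw [← htm, hm, mul_zero]
    exact hmn (by exact_mod_cast hmn')
  exact eq_div_of_mul_eq hm htm

namespace Polynomial

variable {R : Type*} [CommRing R]

theorem rootMultiplicity_eq_of_dvd_sub {p : R[X]} {a c : R} {k : ℕ} (hc : c ≠ 0)
    (h : (X - C a) ^ (k + 1) ∣ p - C c * (X - C a) ^ k) :
    p.rootMultiplicity a = k := by
  obtain ⟨r, hr⟩ := h
  have hp : p = (C c + (X - C a) * r) * (X - C a) ^ k := by linear_combination hr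
  have hroot : (C c + (X - C a) * r).eval a ≠ 0 := by simpa using hc
  rw [hp, rootMultiplicity_mul_X_sub_C_pow (fun h ↦ hroot (by rw [h, eval_zero])),
    rootMultiplicity_eq_zero hroot, zero_add]

theorem X_sub_one_pow_three_dvd_X_pow_mul_geom_sum_sq_sub (m n : ℕ) :
    (X - C 1 : R[X]) ^ 3 ∣ X ^ m * (∑ i ∈ range n, X ^ i) ^ 2
      - ((n : R[X]) ^ 2
        + ((m : R[X]) * (n : R[X]) ^ 2 + 2 * (n : R[X]) * (n.choose 2 : R[X])) * (X - C 1)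
        + ((m.choose 2 : R[X]) * (n : R[X]) ^ 2 + 2 * (m : R[X]) * (n : R[X]) * (n.choose 2 : R[X])
          + (n.choose 2 : R[X]) ^ 2 + 2 * (n : R[X]) * (n.choose 3 : R[X])) * (X - C 1) ^ 2) := by
  rw [← AdjoinRoot.mk_eq_zero]
  set ε := AdjoinRoot.mk ((X - C 1 : R[X]) ^ 3) (X - C 1)
  have hε : ε ^ 3 = 0 := by rw [← map_pow, AdjoinRoot.mk_self]
  have hX : AdjoinRoot.mk ((X - C 1 : R[X]) ^ 3) X = 1 + ε := by simp [ε]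
  simp only [map_sub, map_add, map_mul, map_pow, map_sum, map_natCast, map_ofNat, map_one, hX]
  rw [one_add_pow_mul_geom_sum_sq_of_pow_three_eq_zero hε]
  ring

noncomputable def reducedN (m n : ℕ) (s : R) : R[X] :=
  X ^ m * (∑ i ∈ range n, X ^ i) ^ 2 - C s * X ^ n * (∑ i ∈ range m, X ^ i) ^ 2

theorem X_pow_mul_sub_one_sq_sub_eq (m n : ℕ) (s : R) :
    X ^ m * (X ^ n - 1) ^ 2 - C s * X ^ n * (X ^ m - 1) ^ 2
      = reducedN m n s * (X - C 1) ^ 2 := by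
  rw [reducedN, ← geom_sum_mul X n, ← geom_sum_mul X m, map_one]
  ring

theorem eval_one_reducedN (m n : ℕ) (s : R) :
    (reducedN m n s).eval 1 = n ^ 2 - s * m ^ 2 := by
  simp [reducedN, eval_finsetSum]

theorem X_sub_one_pow_three_dvd_reducedN_sub {K : Type*} [Field K] [CharZero K] {m n : ℕ}
    {s : K} (hs : s * m ^ 2 = n ^ 2) :
    (X - C 1) ^ 3 ∣ reducedN m n s - C (n ^ 2 * (n ^ 2 - m ^ 2) / 12 : K) * (X - C 1) ^ 2 := by
  -- the linear and quadratic coefficients of `reducedN m n s` at `1`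
  have e1 : (m * n ^ 2 + 2 * n * n.choose 2 : K) - s * (n * m ^ 2 + 2 * m * m.choose 2) = 0 := by
    rw [Nat.cast_choose_two, Nat.cast_choose_two]
    linear_combination (-(m + n - 1 : K)) * hs
  have e2 : (m.choose 2 * n ^ 2 + 2 * m * n * n.choose 2 + n.choose 2 ^ 2
        + 2 * n * n.choose 3 : K)
      - s * (n.choose 2 * m ^ 2 + 2 * n * m * m.choose 2 + m.choose 2 ^ 2 + 2 * m * m.choose 3)
      = n ^ 2 * (n ^ 2 - m ^ 2) / 12 := by
    simp only [Nat.cast_choose_two, Nat.cast_choose_three]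
    linear_combination
      (-(n * (n - 1) / 2 + n * (m - 1) + (m - 1) ^ 2 / 4 + (m - 1) * (m - 2) / 3 : K)) * hs
  have h0 := congrArg C (sub_eq_zero.2 hs.symm)
  have h1 := congrArg C e1
  have h2 := congrArg C e2
  simp only [map_sub, map_add, map_mul, map_pow, map_natCast, map_ofNat, map_zero] at h0 h1 h2
  have hQ := (X_sub_one_pow_three_dvd_X_pow_mul_geom_sum_sq_sub m n).sub
    ((X_sub_one_pow_three_dvd_X_pow_mul_geom_sum_sq_sub n m).mul_left (C s))
  convert hQ using 1
  rw [reducedN]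
  linear_combination h0 + (X - C 1) * h1 + (X - C 1) ^ 2 * h2

end Polynomial

theorem rootMultiplicity_one_N_general (m n : ℕ) (hmn : m ≠ n)
    (t : ℝ) (ht : 0 < t) :
    Polynomial.rootMultiplicity (1 : ℝ)
        ((X : Polynomial ℝ) ^ m * ((X : Polynomial ℝ) ^ n - 1) ^ 2
          - Polynomial.C (t ^ 2) * (X : Polynomial ℝ) ^ n * ((X : Polynomial ℝ) ^ m - 1) ^ 2)
      = if t = (n : ℝ) / (m : ℝ) then 4 else 2 := by
  rw [X_pow_mul_sub_one_sq_sub_eq]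
  split_ifs with htnm
  · have hm : (m : ℝ) ≠ 0 := fun hm ↦ ht.ne' (by rw [htnm, hm, div_zero])
    have hn : (n : ℝ) ≠ 0 := fun hn ↦ ht.ne' (by rw [htnm, hn, zero_div])
    have hnm : (n : ℝ) ^ 2 ≠ m ^ 2 := by
      exact_mod_cast (Nat.pow_left_injective two_ne_zero).ne hmn.symm
    have hs : t ^ 2 * m ^ 2 = n ^ 2 := by rw [htnm]; field_simp
    refine rootMultiplicity_eq_of_dvd_sub (k := 4) (c := (n ^ 2 * (n ^ 2 - m ^ 2) / 12 : ℝ))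
      (by simp [hn, sub_ne_zero.2 hnm]) ?_
    convert mul_dvd_mul_right (X_sub_one_pow_three_dvd_reducedN_sub hs) ((X - C 1) ^ 2)
      using 1 <;> ring
  · have hQ1 : (reducedN m n (t ^ 2)).eval 1 ≠ 0 := by
      rw [eval_one_reducedN, sub_ne_zero]
      exact fun h ↦ htnm (eq_div_of_sq_mul_sq_eq_sq ht.le hmn h.symm)
    refine rootMultiplicity_eq_of_dvd_sub (k := 2) hQ1 ?_
    convert mul_dvd_mul_right (X_sub_C_dvd_sub_C_eval (p := reducedN m n (t ^ 2)) (a := 1))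
      ((X - C 1) ^ 2) using 1 <;> ring

/-- For distinct positive integers `m, n` and real `t > 0`, the root `1` of
`N_t(X) = X^m(X^n − 1)² − t² X^n(X^m − 1)² ∈ ℝ[X]` has multiplicity exactly `2` if
`t ≠ n/m`, and exactly `4` if `t = n/m`. -/
theorem rootMultiplicity_one_N (m n : ℕ) (hm : 0 < m) (hn : 0 < n) (hmn : m ≠ n)
    (t : ℝ) (ht : 0 < t) :
    Polynomial.rootMultiplicity (1 : ℝ)
        ((X : Polynomial ℝ) ^ m * ((X : Polynomial ℝ) ^ n - 1) ^ 2
          - Polynomial.C (t ^ 2) * (X : Polynomial ℝ) ^ n * ((X : Polynomial ℝ) ^ m - 1) ^ 2)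
      = if t = (n : ℝ) / (m : ℝ) then 4 else 2 :=
  rootMultiplicity_one_N_general m n hmn t ht
end

section
/- Let t > 0 be real and let S(M) = M³ + 2M² − t². Then: (i) S has exactly one root in (0, ∞), and this root lies in (0, 2) if and only if 0 < t < 4; (ii) if 0 < t² < 32/27, then S has exactly one root in (−2, −4/3) and exactly one root in (−4/3, 0); (iii) if t² > 32/27, then S has no roots in (−2, 0]. -/
open Real

lemma cubic_cont (t : ℝ) :
    Continuous fun M : ℝ => M ^ 3 + 2 * M ^ 2 - t ^ 2 := by continuity

/-- For real `t > 0` and `S(M) = M³ + 2M² − t²`: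
(i) `S` has exactly one root in `(0, ∞)`, and this root lies in `(0, 2)` iff `t < 4`;
(ii) if `t² < 32/27`, `S` has exactly one root in `(−2, −4/3)` and exactly one root in
`(−4/3, 0)`; (iii) if `t² > 32/27`, `S` has no roots in `(−2, 0]`. -/
theorem cubic_root_location (t : ℝ) (ht : 0 < t) :
    ((∃! M : ℝ, M ∈ Set.Ioi (0 : ℝ) ∧ M ^ 3 + 2 * M ^ 2 - t ^ 2 = 0) ∧
      (∀ M : ℝ, M ∈ Set.Ioi (0 : ℝ) → M ^ 3 + 2 * M ^ 2 - t ^ 2 = 0 →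
        (M < 2 ↔ t < 4))) ∧
    (t ^ 2 < 32 / 27 →
      (∃! M : ℝ, M ∈ Set.Ioo (-2 : ℝ) (-4 / 3) ∧ M ^ 3 + 2 * M ^ 2 - t ^ 2 = 0) ∧
      (∃! M : ℝ, M ∈ Set.Ioo (-4 / 3 : ℝ) 0 ∧ M ^ 3 + 2 * M ^ 2 - t ^ 2 = 0)) ∧
    (32 / 27 < t ^ 2 →
      ∀ M ∈ Set.Ioc (-2 : ℝ) 0, M ^ 3 + 2 * M ^ 2 - t ^ 2 ≠ 0) := by
  have hc := (cubic_cont t).continuousOn (s := Set.univ)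
  refine ⟨⟨?_, ?_⟩, ?_, ?_⟩
  · -- unique root in (0, ∞)
    have hsub := intermediate_value_Ioo (a := (0:ℝ)) (b := t) (le_of_lt ht)
      ((cubic_cont t).continuousOn)
    have h0 : (0:ℝ) ∈ Set.Ioo ((0:ℝ)^3 + 2*0^2 - t^2) (t^3 + 2*t^2 - t^2) := by
      constructor <;> nlinarith
    obtain ⟨M, hM, hfM⟩ := hsub h0
    have hfM : M ^ 3 + 2 * M ^ 2 - t ^ 2 = 0 := hfM
    refine ⟨M, ⟨hM.1, hfM⟩, ?_⟩
    rintro y ⟨hy, hfy⟩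
    simp only [Set.mem_Ioi] at hy
    rcases lt_trichotomy y M with h | h | h
    · exfalso; nlinarith [hM.1, sq_nonneg (y + M)]
    · exact h
    · exfalso; nlinarith [hM.1, sq_nonneg (y + M)]
  · rintro M hM hf
    simp only [Set.mem_Ioi] at hM
    constructor
    · intro h2
      nlinarith [sq_nonneg (M + 2)]
    · intro h4
      nlinarith [sq_nonneg (M + 2), sq_nonneg (M - 2)]
  · intro hlt
    constructor
    · -- root in (-2, -4/3), increasing there
      have hsub := intermediate_value_Ioo (a := (-2:ℝ)) (b := -4/3) (by norm_num)
        ((cubic_cont t).continuousOn)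
      have h0 : (0:ℝ) ∈ Set.Ioo ((-2:ℝ)^3 + 2*(-2)^2 - t^2)
          ((-4/3:ℝ)^3 + 2*(-4/3)^2 - t^2) := by
        constructor <;> nlinarith
      obtain ⟨M, hM, hfM⟩ := hsub h0
      have hfM : M ^ 3 + 2 * M ^ 2 - t ^ 2 = 0 := hfM
      refine ⟨M, ⟨hM, hfM⟩, ?_⟩
      rintro y ⟨hy, hfy⟩
      obtain ⟨hy1, hy2⟩ := hy
      obtain ⟨hM1, hM2⟩ := hM
      rcases lt_trichotomy y M with h | h | h
      · exfalso
        nlinarith [mul_nonneg (sub_pos.mpr h).le (sq_nonneg (y + M + 8/3)),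
          mul_nonneg (sub_pos.mpr h).le (sq_nonneg (y - M)),
          mul_pos (sub_pos.mpr h) (show (0:ℝ) < -(y + M + 8/3) by linarith)]
      · exact h
      · exfalso
        nlinarith [mul_nonneg (sub_pos.mpr h).le (sq_nonneg (y + M + 8/3)),
          mul_nonneg (sub_pos.mpr h).le (sq_nonneg (y - M)),
          mul_pos (sub_pos.mpr h) (show (0:ℝ) < -(y + M + 8/3) by linarith)]
    · -- root in (-4/3, 0), decreasing there
      have hsub := intermediate_value_Ioo' (a := (-4/3:ℝ)) (b := 0) (by norm_num)
        ((cubic_cont t).continuousOn)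
      have h0 : (0:ℝ) ∈ Set.Ioo ((0:ℝ)^3 + 2*0^2 - t^2)
          ((-4/3:ℝ)^3 + 2*(-4/3)^2 - t^2) := by
        constructor <;> nlinarith
      obtain ⟨M, hM, hfM⟩ := hsub h0
      have hfM : M ^ 3 + 2 * M ^ 2 - t ^ 2 = 0 := hfM
      refine ⟨M, ⟨hM, hfM⟩, ?_⟩
      rintro y ⟨hy, hfy⟩
      obtain ⟨hy1, hy2⟩ := hy
      obtain ⟨hM1, hM2⟩ := hM
      rcases lt_trichotomy y M with h | h | h
      · exfalso
        nlinarith [sub_pos.mpr h,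
          mul_pos (neg_pos.mpr hy2) (show (0:ℝ) < y + 4/3 by linarith),
          mul_pos (neg_pos.mpr hM2) (show (0:ℝ) < M + 4/3 by linarith),
          mul_nonneg (sub_pos.mpr h).le (sq_nonneg (y - M))]
      · exact h
      · exfalso
        nlinarith [sub_pos.mpr h,
          mul_pos (neg_pos.mpr hy2) (show (0:ℝ) < y + 4/3 by linarith),
          mul_pos (neg_pos.mpr hM2) (show (0:ℝ) < M + 4/3 by linarith),
          mul_nonneg (sub_pos.mpr h).le (sq_nonneg (y - M))]
  · intro hgt M hM hf
    obtain ⟨hM1, hM2⟩ := hM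
    nlinarith [mul_nonneg (sq_nonneg (M + 4/3)) (by linarith : (0:ℝ) ≤ 2/3 - M)]
end

section
/- Let m < n be coprime positive integers and let w, z ∈ ℂ with w ∉ {0, 1} and z ∉ {0, 1}. Suppose w^n z^m = 1, w^m z^n = 1, and (z/w)^{mn} · ((1 − w)/(1 − z))^{2mn} = 1. Then either w^{m+n} = 1 and z^{m+n} = 1, or w^{n−m} = 1 and z^{n−m} = 1. -/
/-!
Taking absolute values, the two gluing equations become a linear system in `log ‖w‖`, `log ‖z‖`
with determinant `n² − m² ≠ 0`, so `w` and `z` lie on the unit circle; the completeness equation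
then gives `‖1 − w‖ = ‖1 − z‖`. On the unit circle this forces `z = w` or `z = conj w = w⁻¹`,
and `w ^ n * z ^ m = 1` becomes `w ^ (m + n) = 1`, respectively `w ^ (n − m) = 1`.
-/

open ComplexConjugate

theorem Real.eq_one_of_pow_mul_pow_eq_one {a b : ℝ} {m n : ℕ} (ha : 0 < a) (hb : 0 < b)
    (hmn : m ≠ n) (h₁ : a ^ n * b ^ m = 1) (h₂ : a ^ m * b ^ n = 1) : a = 1 ∧ b = 1 := by
  have hlog₁ : n * log a + m * log b = 0 := by
    simpa [log_mul (pow_ne_zero _ ha.ne') (pow_ne_zero _ hb.ne'), log_pow] using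
      congrArg log h₁
  have hlog₂ : m * log a + n * log b = 0 := by
    simpa [log_mul (pow_ne_zero _ ha.ne') (pow_ne_zero _ hb.ne'), log_pow] using
      congrArg log h₂
  have hdet : (n : ℝ) ^ 2 - m ^ 2 ≠ 0 := by
    rw [sub_ne_zero]
    exact_mod_cast (Nat.pow_left_injective two_ne_zero).ne hmn.symm
  have hla : log a = 0 :=
    (mul_eq_zero.1 (by linear_combination n * hlog₁ - m * hlog₂)).resolve_left hdet
  have hlb : log b = 0 :=
    (mul_eq_zero.1 (by linear_combination n * hlog₂ - m * hlog₁)).resolve_left hdet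
  exact ⟨eq_one_of_pos_of_log_eq_zero ha hla, eq_one_of_pos_of_log_eq_zero hb hlb⟩

namespace Complex

theorem normSq_one_sub_of_norm_eq_one {w : ℂ} (hw : ‖w‖ = 1) :
    normSq (1 - w) = 2 - 2 * w.re := by
  rw [normSq_sub, normSq_one, normSq_eq_norm_sq w, hw]
  simp only [one_mul, conj_re]
  ring

theorem eq_or_eq_conj_of_norm_one_sub_eq {w z : ℂ} (hw : ‖w‖ = 1) (hz : ‖z‖ = 1)
    (h : ‖1 - w‖ = ‖1 - z‖) : z = w ∨ z = conj w := by
  have hre : z.re = w.re := by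
    have := congrArg (· ^ 2) h
    simp only [← normSq_eq_norm_sq, normSq_one_sub_of_norm_eq_one hw,
      normSq_one_sub_of_norm_eq_one hz] at this
    linarith
  have him : z.im ^ 2 = w.im ^ 2 := by
    rw [← sq_norm_sub_sq_re, ← sq_norm_sub_sq_re, hz, hw, hre]
  rcases sq_eq_sq_iff_eq_or_eq_neg.1 him with him | him
  · exact Or.inl (ext hre him)
  · exact Or.inr (ext (by simpa using hre) (by simpa using him))

end Complex

theorem triangulation_solutions_general (m n : ℕ) (hm : 0 < m) (hmn : m < n)
    (w z : ℂ) (hw0 : w ≠ 0) (hz0 : z ≠ 0)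
    (h1 : w ^ n * z ^ m = 1) (h2 : w ^ m * z ^ n = 1)
    (h3 : (z / w) ^ (m * n) * ((1 - w) / (1 - z)) ^ (2 * (m * n)) = 1) :
    (w ^ (m + n) = 1 ∧ z ^ (m + n) = 1) ∨ (w ^ (n - m) = 1 ∧ z ^ (n - m) = 1) := by
  obtain ⟨hw, hz⟩ : ‖w‖ = 1 ∧ ‖z‖ = 1 :=
    Real.eq_one_of_pow_mul_pow_eq_one (norm_pos_iff.2 hw0) (norm_pos_iff.2 hz0) hmn.ne
      (by simpa using congrArg norm h1) (by simpa using congrArg norm h2)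
  have hdist : ‖1 - w‖ = ‖1 - z‖ := by
    have := congrArg norm h3
    rw [norm_mul, norm_pow, norm_div, hw, hz, div_one, one_pow, one_mul, norm_pow, norm_one,
      pow_eq_one_iff_of_nonneg (by positivity) (by simp [hm.ne', (hm.trans hmn).ne']),
      norm_div] at this
    exact eq_of_div_eq_one this
  rcases Complex.eq_or_eq_conj_of_norm_one_sub_eq hw hz hdist with h | h
  all_goals subst z
  · have : w ^ (m + n) = 1 := by rwa [pow_add, mul_comm]
    exact Or.inl ⟨this, this⟩
  · have : w ^ (n - m) = 1 := by
      rwa [← Complex.inv_eq_conj hw, inv_pow, ← div_eq_mul_inv,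
        div_eq_one_iff_eq (pow_ne_zero _ hw0), ← pow_sub_mul_pow w hmn.le,
        mul_eq_right₀ (pow_ne_zero _ hw0)] at h1
    exact Or.inr ⟨this, by rw [← map_pow, this, map_one]⟩

/-- Let `m < n` be coprime positive integers and `w, z ∈ ℂ \ {0, 1}` with
`w^n z^m = 1`, `w^m z^n = 1` and `(z/w)^{mn}((1 − w)/(1 − z))^{2mn} = 1`.  Then either
`w` and `z` are `(m+n)`-th roots of unity, or they are `(n−m)`-th roots of unity. -/
theorem triangulation_solutions (m n : ℕ) (hm : 0 < m) (hmn : m < n)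
    (hcop : Nat.Coprime m n) (w z : ℂ) (hw0 : w ≠ 0) (hw1 : w ≠ 1)
    (hz0 : z ≠ 0) (hz1 : z ≠ 1)
    (h1 : w ^ n * z ^ m = 1) (h2 : w ^ m * z ^ n = 1)
    (h3 : (z / w) ^ (m * n) * ((1 - w) / (1 - z)) ^ (2 * (m * n)) = 1) :
    (w ^ (m + n) = 1 ∧ z ^ (m + n) = 1) ∨ (w ^ (n - m) = 1 ∧ z ^ (n - m) = 1) :=
  triangulation_solutions_general m n hm hmn w z hw0 hz0 h1 h2 h3
end
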